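/- arXiv:2501.18572 — 8 statements merged into one kernel-verified Lean document; each statement's English description precedes it below -/
import Mathlib

section
/- Fix reals α, β, γ, λ, μ > 0 and set κ = λ+α+β. For the seven-state Markov-machine chain (defined in the context), let π be a probability vector satisfying the balance equations Σ_s π_s Q_{s,s'} = 0 for all states s'. Then the false acceptance ratio satisfies FAR := π_{(1,0)}/(π_{(1,0)} + π_{(0,0)}) = α/(μ+κ). -/
/-!
The balance equation at the state `(1,0)` says `α π₍₀,₀₎ = (β + μ + λ) π₍₁,₀₎`, which rearranges to
`π₍₁,₀₎ (μ + κ) = α (π₍₀,₀₎ + π₍₁,₀₎)`. It remains to see that the accepting states carry positive mass: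
if `π₍₀,₀₎ = π₍₁,₀₎ = 0`, the balance equations at `(0,0)`, `(0,1)` and `(0,2)` express sums of
nonnegative terms as zero and force every other `π_s` to vanish, contradicting `∑ π_s = 1`.
-/

/-- The generator matrix of the seven-state Markov-machine chain, with states indexed
0=(0,0), 1=(1,0), 2=(0,1), 3=(1,1), 4=(0,2), 5=(1,2), 6=(2,2). -/
noncomputable def mmGen7 (α β γ lam μ : ℝ) : Matrix (Fin 7) (Fin 7) ℝ :=
  !![-(α + lam), α,              0,        0,  0,        0,        lam;
     β,          -(β + μ + lam), 0,        μ + lam, 0,   0,        0;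
     μ,          0,              -(α + μ), α,  0,        0,        0;
     0,          0,              β,        -β, 0,        0,        0;
     μ,          0,              0,        0,  -(α + μ), α,        0;
     0,          0,              0,        μ,  β,        -(β + μ), 0;
     0,          0,              0,        0,  γ,        0,        -γ]

section Balance

variable (α β γ lam μ : ℝ) (π : Fin 7 → ℝ)

theorem sum_mul_mmGen7_zero :
    ∑ i, π i * mmGen7 α β γ lam μ i 0 = -(α + lam) * π 0 + β * π 1 + μ * π 2 + μ * π 4 := by
  simp only [mmGen7, Fin.sum_univ_seven, Matrix.of_apply, Matrix.cons_val]; ring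

theorem sum_mul_mmGen7_one :
    ∑ i, π i * mmGen7 α β γ lam μ i 1 = α * π 0 - (β + μ + lam) * π 1 := by
  simp only [mmGen7, Fin.sum_univ_seven, Matrix.of_apply, Matrix.cons_val]; ring

theorem sum_mul_mmGen7_two :
    ∑ i, π i * mmGen7 α β γ lam μ i 2 = -(α + μ) * π 2 + β * π 3 := by
  simp only [mmGen7, Fin.sum_univ_seven, Matrix.of_apply, Matrix.cons_val]; ring

theorem sum_mul_mmGen7_four :
    ∑ i, π i * mmGen7 α β γ lam μ i 4 = -(α + μ) * π 4 + β * π 5 + γ * π 6 := by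
  simp only [mmGen7, Fin.sum_univ_seven, Matrix.of_apply, Matrix.cons_val]; ring

end Balance

theorem eq_zero_and_eq_zero_of_mul_add_mul_eq_zero {a b x y : ℝ} (ha : 0 < a) (hb : 0 < b)
    (hx : 0 ≤ x) (hy : 0 ≤ y) (h : a * x + b * y = 0) : x = 0 ∧ y = 0 := by
  have hax : a * x = 0 := by nlinarith [mul_nonneg ha.le hx, mul_nonneg hb.le hy]
  have hby : b * y = 0 := by linarith
  exact ⟨(mul_eq_zero.1 hax).resolve_left ha.ne', (mul_eq_zero.1 hby).resolve_left hb.ne'⟩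

theorem mmGen7_accepting_mass_pos {α β γ lam μ : ℝ} (hβ : 0 < β) (hγ : 0 < γ) (hμ : 0 < μ)
    {π : Fin 7 → ℝ} (hπnn : ∀ s, 0 ≤ π s) (hπsum : ∑ s, π s = 1)
    (hbal : ∀ j, ∑ i, π i * mmGen7 α β γ lam μ i j = 0) :
    0 < π 0 + π 1 := by
  by_contra! hle
  have h0 : π 0 = 0 := by linarith [hπnn 0, hπnn 1]
  have h1 : π 1 = 0 := by linarith [hπnn 0, hπnn 1]
  have bal0 := hbal 0
  have bal2 := hbal 2
  have bal4 := hbal 4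
  rw [sum_mul_mmGen7_zero, h0, h1] at bal0
  rw [sum_mul_mmGen7_two] at bal2
  rw [sum_mul_mmGen7_four] at bal4
  obtain ⟨h2, h4⟩ := eq_zero_and_eq_zero_of_mul_add_mul_eq_zero hμ hμ (hπnn 2) (hπnn 4)
    (by linarith)
  have h3 : π 3 = 0 := by
    rw [h2] at bal2
    exact (mul_eq_zero.1 (by linarith : β * π 3 = 0)).resolve_left hβ.ne'
  obtain ⟨h5, h6⟩ := eq_zero_and_eq_zero_of_mul_add_mul_eq_zero hβ hγ (hπnn 5) (hπnn 6)
    (by rw [h4] at bal4; linarith)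
  rw [Fin.sum_univ_seven, h0, h1, h2, h3, h4, h5, h6] at hπsum
  norm_num at hπsum

/-- For the seven-state Markov-machine chain, if π is a stationary
probability vector, then FAR = π_{(1,0)}/(π_{(1,0)} + π_{(0,0)}) = α/(μ+κ). -/
theorem far_closed_form
    (α β γ lam μ : ℝ) (hα : 0 < α) (hβ : 0 < β) (hγ : 0 < γ)
    (hlam : 0 < lam) (hμ : 0 < μ)
    (κ : ℝ) (hκ : κ = lam + α + β)
    (π : Fin 7 → ℝ) (hπnn : ∀ s, 0 ≤ π s) (hπsum : ∑ s, π s = 1)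
    (hbal : ∀ j, ∑ i, π i * mmGen7 α β γ lam μ i j = 0) :
    π 1 / (π 1 + π 0) = α / (μ + κ) := by
  have hflow : α * π 0 - (β + μ + lam) * π 1 = 0 := sum_mul_mmGen7_one α β γ lam μ π ▸ hbal 1
  have hacc := mmGen7_accepting_mass_pos hβ hγ hμ hπnn hπsum hbal
  subst hκ
  rw [div_eq_div_iff (by linarith) (by positivity)]
  linear_combination -hflow
end

section
/- Fix reals α, β, γ, λ, μ > 0 and set κ = λ+α+β and β̃ = λβ(λ+β) + γ(λβ + λα + ακ). For the seven-state Markov-machine chain (defined in the context), let π be a probability vector satisfying the balance equations πQ = 0. Then the false rejection ratio satisfies FRR := (π_{(0,2)}+π_{(0,1)})/(π_{(0,2)}+π_{(0,1)}+π_{(1,2)}+π_{(1,1)}+π_{(2,2)}) = γβ(μ(λ+α)+λκ) / ((αγ+λβ)μ² + β̃μ + γλ(β+α)κ). -/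
/-- The balance equation at `(0,0)` is omitted: it is minus the sum of the other six. -/
lemma mmGen7_stationary_equations {α β γ lam μ : ℝ} {π : Fin 7 → ℝ}
    (hbal : ∀ j, ∑ i, π i * mmGen7 α β γ lam μ i j = 0) :
    α * π 0 - (β + μ + lam) * π 1 = 0 ∧
    -(α + μ) * π 2 + β * π 3 = 0 ∧
    (μ + lam) * π 1 + α * π 2 - β * π 3 + μ * π 5 = 0 ∧
    -(α + μ) * π 4 + β * π 5 + γ * π 6 = 0 ∧
    α * π 4 - (β + μ) * π 5 = 0 ∧
    lam * π 0 - γ * π 6 = 0 := by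
  simp only [mmGen7, Fin.forall_fin_succ, Fin.sum_univ_seven, Matrix.of_apply, Matrix.cons_val',
    Matrix.cons_val_fin_one, Matrix.cons_val_zero, Matrix.cons_val_one, Matrix.cons_val,
    Matrix.cons_val_succ, mul_zero, add_zero, zero_add, mul_neg, forall_const] at hbal
  refine ⟨?_, ?_, ?_, ?_, ?_, ?_⟩ <;> linarith [hbal]

/-- An unnormalised stationary measure, cleared of denominators (`A = β + μ + λ`,
`B = α + β + μ`). Solving the balance equations relative to the `(2,2)`-entry gives
`π₀ = γπ₆/λ`, `π₁ = απ₀/A`, `π₄, π₅` from the `(0,2) ↔ (1,2)` block, and `π₂, π₃`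
from the `(0,1) ↔ (1,1)` block. -/
noncomputable def mmWeights (α β γ lam μ : ℝ) : Fin 7 → ℝ :=
  let A := β + μ + lam
  let B := α + β + μ
  let W := (μ + lam) * B + lam * A
  ![γ * β * μ * A * B, α * γ * β * μ * B, α * γ * β * W, α * γ * (μ + α) * W,
    γ * (β + μ) * β * lam * A, α * γ * β * lam * A, β * μ * lam * A * B]

lemma mmWeights_six_pos {α β γ lam μ : ℝ} (hα : 0 < α) (hβ : 0 < β)
    (hlam : 0 < lam) (hμ : 0 < μ) : 0 < mmWeights α β γ lam μ 6 := by
  simp only [mmWeights, Matrix.cons_val]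
  positivity

lemma mmWeights_six_mul_eq {α β γ lam μ : ℝ} {π : Fin 7 → ℝ}
    (hbal : ∀ j, ∑ i, π i * mmGen7 α β γ lam μ i j = 0) (s : Fin 7) :
    mmWeights α β γ lam μ 6 * π s = π 6 * mmWeights α β γ lam μ s := by
  obtain ⟨e1, e2, e3, e4, e5, e6⟩ := mmGen7_stationary_equations hbal
  set A := β + μ + lam
  set B := α + β + μ
  set W := (μ + lam) * B + lam * A
  have hπ1 : lam * A * π 1 - α * γ * π 6 = 0 := by linear_combination α * e6 - lam * e1
  have hπ4 : μ * B * π 4 - γ * (β + μ) * π 6 = 0 := by linear_combination -(β + μ) * e4 - β * e5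
  have hπ5 : μ * B * π 5 - α * γ * π 6 = 0 := by linear_combination -α * e4 - (μ + α) * e5
  have hπ2 : μ * lam * A * B * π 2 - α * γ * W * π 6 = 0 := by
    linear_combination -lam * A * B * (e2 + e3) + (μ + lam) * B * hπ1 + lam * A * hπ5
  fin_cases s <;> simp only [mmWeights, Fin.reduceFinMk, Matrix.cons_val]
  · linear_combination β * μ * A * B * e6
  · linear_combination β * μ * B * hπ1
  · linear_combination β * hπ2
  · linear_combination μ * lam * A * B * e2 + (μ + α) * hπ2
  · linear_combination β * lam * A * hπ4
  · linear_combination β * lam * A * hπ5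
  · ring

noncomputable def falseRejectionRatio (p : Fin 7 → ℝ) : ℝ :=
  (p 4 + p 2) / (p 4 + p 2 + p 5 + p 3 + p 6)

lemma falseRejectionRatio_smul (p : Fin 7 → ℝ) {c : ℝ} (hc : c ≠ 0) :
    falseRejectionRatio (c • p) = falseRejectionRatio p := by
  simp only [falseRejectionRatio, Pi.smul_apply, smul_eq_mul, ← mul_add]
  exact mul_div_mul_left _ _ hc

lemma falseRejectionRatio_mmWeights {α β γ lam μ : ℝ} (hα : 0 < α) (hβ : 0 < β) (hγ : 0 < γ)
    (hlam : 0 < lam) (hμ : 0 < μ) :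
    falseRejectionRatio (mmWeights α β γ lam μ)
      = γ * β * (μ * (lam + α) + lam * (lam + α + β)) /
        ((α * γ + lam * β) * μ ^ 2
          + (lam * β * (lam + β) + γ * (lam * β + lam * α + α * (lam + α + β))) * μ
          + γ * lam * (β + α) * (lam + α + β)) := by
  simp only [falseRejectionRatio, mmWeights, Matrix.cons_val]
  rw [div_eq_div_iff (by positivity) (by positivity)]
  ring

theorem frr_closed_form_general
    (α β γ lam μ : ℝ) (hα : 0 < α) (hβ : 0 < β) (hγ : 0 < γ)
    (hlam : 0 < lam) (hμ : 0 < μ)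
    (κ : ℝ) (hκ : κ = lam + α + β)
    (βt : ℝ) (hβt : βt = lam * β * (lam + β) + γ * (lam * β + lam * α + α * κ))
    (π : Fin 7 → ℝ) (hπsum : ∑ s, π s = 1)
    (hbal : ∀ j, ∑ i, π i * mmGen7 α β γ lam μ i j = 0) :
    (π 4 + π 2) / (π 4 + π 2 + π 5 + π 3 + π 6)
      = γ * β * (μ * (lam + α) + lam * κ) /
        ((α * γ + lam * β) * μ ^ 2 + βt * μ + γ * lam * (β + α) * κ) := by
  subst hκ hβt
  set w := mmWeights α β γ lam μ
  have hw6 : w 6 ≠ 0 := (mmWeights_six_pos hα hβ hlam hμ).ne'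
  have hπ6 : π 6 ≠ 0 := by
    intro h0
    have hzero : ∀ s, π s = 0 := fun s =>
      mul_left_cancel₀ hw6 (by rw [mmWeights_six_mul_eq hbal s, h0, zero_mul, mul_zero])
    simp [hzero] at hπsum
  have hπ : π = (π 6 / w 6) • w := by
    funext s
    rw [Pi.smul_apply, smul_eq_mul, div_mul_eq_mul_div, ← mmWeights_six_mul_eq hbal s,
      mul_div_cancel_left₀ _ hw6]
  change falseRejectionRatio π = _
  rw [hπ, falseRejectionRatio_smul w (div_ne_zero hπ6 hw6),
    falseRejectionRatio_mmWeights hα hβ hγ hlam hμ]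

/-- For the seven-state Markov-machine chain with stationary distribution π,
the false rejection ratio has the stated closed form. -/
theorem frr_closed_form
    (α β γ lam μ : ℝ) (hα : 0 < α) (hβ : 0 < β) (hγ : 0 < γ)
    (hlam : 0 < lam) (hμ : 0 < μ)
    (κ : ℝ) (hκ : κ = lam + α + β)
    (βt : ℝ) (hβt : βt = lam * β * (lam + β) + γ * (lam * β + lam * α + α * κ))
    (π : Fin 7 → ℝ) (hπnn : ∀ s, 0 ≤ π s) (hπsum : ∑ s, π s = 1)
    (hbal : ∀ j, ∑ i, π i * mmGen7 α β γ lam μ i j = 0) :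
    (π 4 + π 2) / (π 4 + π 2 + π 5 + π 3 + π 6)
      = γ * β * (μ * (lam + α) + lam * κ) /
        ((α * γ + lam * β) * μ ^ 2 + βt * μ + γ * lam * (β + α) * κ) :=
  frr_closed_form_general α β γ lam μ hα hβ hγ hlam hμ κ hκ βt hβt π hπsum hbal
end

section
/- Fix reals α, β, λ, μ > 0. For the four-state Markov-machine chain (defined in the context, corresponding to the case β = γ), let π be a probability vector satisfying the balance equations πQ = 0. Then the false rejection ratio satisfies FRR := π_{(0,1)}/(π_{(0,1)}+π_{(1,1)}) = β/(μ+α+β). -/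
/-- The generator matrix of the four-state Markov-machine chain (case β = γ), with states
indexed 0=(0,0), 1=(1,0), 2=(0,1), 3=(1,1). -/
noncomputable def mmGen4 (α β lam μ : ℝ) : Matrix (Fin 4) (Fin 4) ℝ :=
  !![-(α + lam), α,              0,        lam;
     β,          -(β + μ + lam), 0,        μ + lam;
     μ,          0,              -(α + μ), α;
     0,          0,              β,        -β]

/-! State (0,1) is entered only from (1,1), at rate β, and left at rate α + μ, so its balance
equation reads β π₍₁,₁₎ = (α + μ) π₍₀,₁₎, which already fixes the ratio of the two masses.
It remains to see that the pair {(0,1), (1,1)} carries positive mass: otherwise the balance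
equation of (1,1) forces λ π₍₀,₀₎ + (μ + λ) π₍₁,₀₎ = 0 and the whole distribution vanishes. -/

theorem div_add_eq_div_add_of_mul_eq {a b c d : ℝ} (h : d * b = c * a) (hab : a + b ≠ 0)
    (hcd : c + d ≠ 0) : a / (a + b) = d / (c + d) := by
  rw [div_eq_div_iff hab hcd]
  linarith

section Balance

variable {α β lam μ : ℝ} {π : Fin 4 → ℝ}

theorem sum_mul_mmGen4_two :
    ∑ i, π i * mmGen4 α β lam μ i 2 = β * π 3 - (α + μ) * π 2 := by
  simp only [Fin.sum_univ_four, mmGen4, Matrix.of_apply, Matrix.cons_val', Matrix.cons_val,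
    Matrix.cons_val_fin_one, Matrix.cons_val_zero, Matrix.cons_val_one]
  ring

theorem sum_mul_mmGen4_three :
    ∑ i, π i * mmGen4 α β lam μ i 3 = lam * π 0 + (μ + lam) * π 1 + α * π 2 - β * π 3 := by
  simp only [Fin.sum_univ_four, mmGen4, Matrix.of_apply, Matrix.cons_val', Matrix.cons_val,
    Matrix.cons_val_fin_one, Matrix.cons_val_zero, Matrix.cons_val_one]
  ring

theorem add_ne_zero_of_balance_three (hlam : 0 < lam) (hμ : 0 ≤ μ) (hπnn : ∀ s, 0 ≤ π s)
    (hπsum : ∑ s, π s = 1) (hbal : ∑ i, π i * mmGen4 α β lam μ i 3 = 0) :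
    π 2 + π 3 ≠ 0 := by
  intro h
  have h2 : π 2 = 0 := by linarith [hπnn 2, hπnn 3]
  have h3 : π 3 = 0 := by linarith [hπnn 2, hπnn 3]
  rw [sum_mul_mmGen4_three, h2, h3] at hbal
  have hμlam : 0 < μ + lam := add_pos_of_nonneg_of_pos hμ hlam
  have hin0 := mul_nonneg hlam.le (hπnn 0)
  have hin1 := mul_nonneg hμlam.le (hπnn 1)
  have h0 : π 0 = 0 := (mul_eq_zero.mp (by linarith : lam * π 0 = 0)).resolve_left hlam.ne'
  have h1 : π 1 = 0 := (mul_eq_zero.mp (by linarith : (μ + lam) * π 1 = 0)).resolve_left hμlam.ne'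
  simp [Fin.sum_univ_four, h0, h1, h2, h3] at hπsum

end Balance

/-- For the four-state Markov-machine chain with stationary distribution π,
FRR = π_{(0,1)}/(π_{(0,1)} + π_{(1,1)}) = β/(μ+α+β). -/
theorem frr_closed_form_four_state
    (α β lam μ : ℝ) (hα : 0 < α) (hβ : 0 < β) (hlam : 0 < lam) (hμ : 0 < μ)
    (π : Fin 4 → ℝ) (hπnn : ∀ s, 0 ≤ π s) (hπsum : ∑ s, π s = 1)
    (hbal : ∀ j, ∑ i, π i * mmGen4 α β lam μ i j = 0) :
    π 2 / (π 2 + π 3) = β / (μ + α + β) := by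
  have hflow : β * π 3 = (μ + α) * π 2 := by
    have h2 := hbal 2
    rw [sum_mul_mmGen4_two] at h2
    linarith
  exact div_add_eq_div_add_of_mul_eq hflow
    (add_ne_zero_of_balance_three hlam hμ.le hπnn hπsum (hbal 3)) (by positivity)
end

section
/- Fix reals α, β, λ, μ > 0 and set κ = λ+α+β. For the four-state Markov-machine chain (defined in the context, corresponding to the case β = γ), let π be a probability vector satisfying the balance equations πQ = 0. Then the expected freshness satisfies E[Δ] := π_{(0,0)} + π_{(1,1)} = (κμ² + (κ²−2αβ)μ + λακ) / (κμ² + (κ²+βλ)μ + λ(α+β)κ). -/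
def mmWeight (α β lam μ : ℝ) : Fin 4 → ℝ :=
  let r := (α + lam) * (μ + lam) + β * lam
  ![β * μ * (β + μ + lam), α * β * μ, β * r, (α + μ) * r]

section

variable {α β lam μ : ℝ}

theorem eq_smul_mmWeight_of_vecMul_mmGen4_eq_zero (hβ : β ≠ 0) (hμ : μ ≠ 0)
    (hc : β + μ + lam ≠ 0) {π : Fin 4 → ℝ} (hπ : Matrix.vecMul π (mmGen4 α β lam μ) = 0) :
    π = (π 0 / (β * μ * (β + μ + lam))) • mmWeight α β lam μ := by
  have e0 := congrFun hπ 0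
  have e1 := congrFun hπ 1
  have e2 := congrFun hπ 2
  simp only [Matrix.vecMul, dotProduct, mmGen4, Fin.sum_univ_four, Matrix.of_apply, Matrix.cons_val',
    Matrix.cons_val_zero, Matrix.cons_val_one, Matrix.cons_val, Matrix.cons_val_fin_one, Fin.isValue,
    neg_add_rev, mul_zero, add_zero, zero_add, Pi.zero_apply] at e0 e1 e2
  funext i
  fin_cases i <;>
    simp only [mmWeight, Pi.smul_apply, smul_eq_mul, Fin.zero_eta, Fin.mk_one, Fin.reduceFinMk,
      Fin.isValue, Matrix.cons_val_zero, Matrix.cons_val_one, Matrix.cons_val] <;>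
    field_simp
  · linear_combination -e1
  · linear_combination (β + μ + lam) * e0 + β * e1
  · linear_combination μ * (β + μ + lam) * e2 + (α + μ) * ((β + μ + lam) * e0 + β * e1)

theorem mmWeight_pos (hα : 0 < α) (hβ : 0 < β) (hlam : 0 < lam) (hμ : 0 < μ) (i : Fin 4) :
    0 < mmWeight α β lam μ i := by
  fin_cases i <;>
    simp only [mmWeight, Fin.zero_eta, Fin.mk_one, Fin.reduceFinMk, Fin.isValue,
      Matrix.cons_val_zero, Matrix.cons_val_one, Matrix.cons_val] <;>
    positivity

theorem sum_mmWeight :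
    ∑ i, mmWeight α β lam μ i = (lam + α + β) * μ ^ 2 + ((lam + α + β) ^ 2 + β * lam) * μ
      + lam * (α + β) * (lam + α + β) := by
  simp only [mmWeight, Fin.sum_univ_four, Fin.isValue, Matrix.cons_val_zero, Matrix.cons_val_one,
    Matrix.cons_val]
  ring

theorem mmWeight_zero_add_three :
    mmWeight α β lam μ 0 + mmWeight α β lam μ 3 = (lam + α + β) * μ ^ 2
      + ((lam + α + β) ^ 2 - 2 * α * β) * μ + lam * α * (lam + α + β) := by
  simp only [mmWeight, Fin.isValue, Matrix.cons_val_zero, Matrix.cons_val]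
  ring

end

theorem freshness_closed_form_four_state_general
    (α β lam μ : ℝ) (hα : 0 < α) (hβ : 0 < β) (hlam : 0 < lam) (hμ : 0 < μ)
    (κ : ℝ) (hκ : κ = lam + α + β)
    (π : Fin 4 → ℝ) (hπsum : ∑ s, π s = 1)
    (hbal : ∀ j, ∑ i, π i * mmGen4 α β lam μ i j = 0) :
    π 0 + π 3
      = (κ * μ ^ 2 + (κ ^ 2 - 2 * α * β) * μ + lam * α * κ) /
        (κ * μ ^ 2 + (κ ^ 2 + β * lam) * μ + lam * (α + β) * κ) := by
  subst hκ
  rw [← sum_mmWeight, ← mmWeight_zero_add_three]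
  set t := π 0 / (β * μ * (β + μ + lam))
  have hπ : π = t • mmWeight α β lam μ :=
    eq_smul_mmWeight_of_vecMul_mmGen4_eq_zero hβ.ne' hμ.ne' (by positivity) (funext hbal)
  have hsum_pos : 0 < ∑ i, mmWeight α β lam μ i :=
    Finset.sum_pos (fun i _ => mmWeight_pos hα hβ hlam hμ i) Finset.univ_nonempty
  have ht : t * ∑ i, mmWeight α β lam μ i = 1 := by
    rw [← hπsum, hπ, Finset.mul_sum]
    rfl
  rw [eq_div_iff hsum_pos.ne', hπ]
  simp only [Pi.smul_apply, smul_eq_mul]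
  linear_combination (mmWeight α β lam μ 0 + mmWeight α β lam μ 3) * ht

/-- For the four-state Markov-machine chain with stationary distribution π,
the expected freshness E[Δ] = π_{(0,0)} + π_{(1,1)} has the stated closed form. -/
theorem freshness_closed_form_four_state
    (α β lam μ : ℝ) (hα : 0 < α) (hβ : 0 < β) (hlam : 0 < lam) (hμ : 0 < μ)
    (κ : ℝ) (hκ : κ = lam + α + β)
    (π : Fin 4 → ℝ) (hπnn : ∀ s, 0 ≤ π s) (hπsum : ∑ s, π s = 1)
    (hbal : ∀ j, ∑ i, π i * mmGen4 α β lam μ i j = 0) :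
    π 0 + π 3
      = (κ * μ ^ 2 + (κ ^ 2 - 2 * α * β) * μ + lam * α * κ) /
        (κ * μ ^ 2 + (κ ^ 2 + β * lam) * μ + lam * (α + β) * κ) :=
  freshness_closed_form_four_state_general α β lam μ hα hβ hlam hμ κ hκ π hπsum hbal
end

section
/- Fix reals α, β, λ > 0 and set κ = λ+α+β. Define the staleness function Δ̃(μ) = (β(λ+2α)μ + λβκ)/(κμ² + (κ²+βλ)μ + λ(α+β)κ) for μ ≥ 0. If (κ−α)² + α(λ−α) ≥ 0, then the derivative of Δ̃ satisfies Δ̃'(μ) ≤ 0 for all μ ≥ 0; in particular Δ̃ is monotone nonincreasing on [0,∞). -/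
/-!
The staleness is an affine function over a quadratic, `(a x + b) / (c x² + d x + e)`, whose
derivative is `-(a c x² + 2 b c x + (b d - a e)) / (c x² + d x + e)²`. For the staleness, `a c`
and `b c` are visibly nonnegative, and `b d - a e = λ β κ ((κ - α)² + α (λ - α))`, so the
hypothesis makes the numerator nonnegative on `[0, ∞)`.
-/

open Set

theorem antitoneOn_of_forall_hasDerivAt_nonpos {D : Set ℝ} (hD : Convex ℝ D) {f f' : ℝ → ℝ}
    (hf : ∀ x ∈ D, HasDerivAt f (f' x) x) (hf' : ∀ x ∈ D, f' x ≤ 0) : AntitoneOn f D :=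
  antitoneOn_of_hasDerivWithinAt_nonpos hD
    (fun x hx ↦ (hf x hx).continuousAt.continuousWithinAt)
    (fun x hx ↦ (hf x (interior_subset hx)).hasDerivWithinAt)
    (fun x hx ↦ hf' x (interior_subset hx))

section AffineDivQuadratic

variable {a b c d e : ℝ}

theorem hasDerivAt_affine_div_quadratic {x : ℝ} (hq : c * x ^ 2 + d * x + e ≠ 0) :
    HasDerivAt (fun x ↦ (a * x + b) / (c * x ^ 2 + d * x + e))
      (-(a * c * x ^ 2 + 2 * b * c * x + (b * d - a * e)) / (c * x ^ 2 + d * x + e) ^ 2) x := by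
  have hnum : HasDerivAt (fun x ↦ a * x + b) a x :=
    (((hasDerivAt_id x).const_mul a).add_const b).congr_deriv (mul_one a)
  have hden : HasDerivAt (fun x ↦ c * x ^ 2 + d * x + e) (2 * c * x + d) x :=
    ((((hasDerivAt_pow 2 x).const_mul c).add ((hasDerivAt_id x).const_mul d)).add_const e
      ).congr_deriv (by push_cast; ring)
  exact (hnum.div hden hq).congr_deriv (by ring)

theorem affine_div_quadratic_deriv_nonpos (hac : 0 ≤ a * c) (hbc : 0 ≤ b * c)
    (hbd : a * e ≤ b * d) {x : ℝ} (hx : 0 ≤ x) :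
    -(a * c * x ^ 2 + 2 * b * c * x + (b * d - a * e)) / (c * x ^ 2 + d * x + e) ^ 2 ≤ 0 := by
  apply div_nonpos_of_nonpos_of_nonneg _ (sq_nonneg _)
  nlinarith [mul_nonneg hac (sq_nonneg x), mul_nonneg hbc hx]

theorem deriv_nonpos_and_antitoneOn_affine_div_quadratic
    (hq : ∀ x, 0 ≤ x → c * x ^ 2 + d * x + e ≠ 0)
    (hac : 0 ≤ a * c) (hbc : 0 ≤ b * c) (hbd : a * e ≤ b * d) :
    (∀ x : ℝ, 0 ≤ x → deriv (fun x ↦ (a * x + b) / (c * x ^ 2 + d * x + e)) x ≤ 0) ∧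
      AntitoneOn (fun x ↦ (a * x + b) / (c * x ^ 2 + d * x + e)) (Ici 0) := by
  refine ⟨fun x hx ↦ ?_, antitoneOn_of_forall_hasDerivAt_nonpos (convex_Ici 0)
    (fun x hx ↦ hasDerivAt_affine_div_quadratic (hq x hx))
    (fun x hx ↦ affine_div_quadratic_deriv_nonpos hac hbc hbd hx)⟩
  rw [(hasDerivAt_affine_div_quadratic (hq x hx)).deriv]
  exact affine_div_quadratic_deriv_nonpos hac hbc hbd hx

end AffineDivQuadratic

/-- If (κ−α)² + α(λ−α) ≥ 0 then the staleness Δ̃ has nonpositive derivative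
for all μ ≥ 0, and in particular is monotone nonincreasing on [0,∞). -/
theorem staleness_antitone
    (α β lam : ℝ) (hα : 0 < α) (hβ : 0 < β) (hlam : 0 < lam)
    (κ : ℝ) (hκ : κ = lam + α + β)
    (hcond : 0 ≤ (κ - α) ^ 2 + α * (lam - α)) :
    (∀ μ : ℝ, 0 ≤ μ →
      deriv (fun x : ℝ =>
        (β * (lam + 2 * α) * x + lam * β * κ) /
        (κ * x ^ 2 + (κ ^ 2 + β * lam) * x + lam * (α + β) * κ)) μ ≤ 0) ∧
    AntitoneOn (fun x : ℝ =>
        (β * (lam + 2 * α) * x + lam * β * κ) /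
        (κ * x ^ 2 + (κ ^ 2 + β * lam) * x + lam * (α + β) * κ))
      (Set.Ici 0) := by
  have hκpos : 0 < κ := by rw [hκ]; positivity
  have hdisc : lam * β * κ * (κ ^ 2 + β * lam) - β * (lam + 2 * α) * (lam * (α + β) * κ) =
      lam * β * κ * ((κ - α) ^ 2 + α * (lam - α)) := by
    subst hκ; ring
  refine deriv_nonpos_and_antitoneOn_affine_div_quadratic (fun x hx ↦ ?_) (by positivity)
    (by positivity) ?_
  · positivity
  · rw [← sub_nonneg, hdisc]
    positivity
end

section
/- Fix reals α, β, λ > 0 and set κ = λ+α+β. Define the staleness function Δ̃(μ) = (β(λ+2α)μ + λβκ)/(κμ² + (κ²+βλ)μ + λ(α+β)κ) for μ ≥ 0. If (κ−α)² + α(λ−α) < 0, then the derivative of Δ̃ at μ = 0 is strictly positive, and there exists M > 0 such that Δ̃'(μ) < 0 for all μ > M. -/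
/-!
For `f(x) = (a x + b) / (p x² + c x + d)` the quotient rule gives
`f'(x) = (-a p x² - 2 b p x + (a d - b c)) / (p x² + c x + d)²`.
For the staleness function `a d - b c = -λβκ ((κ - α)² + α (λ - α))`, so the hypothesis makes
`f'(0) > 0`, while the leading coefficient `-a p = -β (λ + 2α) κ` of the numerator is negative,
so `f'` is eventually negative.
-/

open Filter

theorem eventually_neg_mul_sq_add_mul_add_neg {A : ℝ} (hA : 0 < A) (B C : ℝ) :
    ∀ᶠ x in atTop, -A * x ^ 2 + B * x + C < 0 := by
  have hlin : Tendsto (fun x : ℝ => A * x - B) atTop atTop :=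
    tendsto_atTop_add_const_right _ _ (tendsto_id.const_mul_atTop hA)
  have hquad : Tendsto (fun x : ℝ => x * (A * x - B) - C) atTop atTop :=
    tendsto_atTop_add_const_right _ _ (tendsto_id.atTop_mul_atTop₀ hlin)
  filter_upwards [hquad.eventually_gt_atTop 0] with x hx
  linarith

section LinearDivQuadratic

variable (a b p c d : ℝ)

theorem hasDerivAt_linear_div_quadratic {x : ℝ} (hD : p * x ^ 2 + c * x + d ≠ 0) :
    HasDerivAt (fun x => (a * x + b) / (p * x ^ 2 + c * x + d))
      ((-(a * p) * x ^ 2 - 2 * b * p * x + (a * d - b * c)) / (p * x ^ 2 + c * x + d) ^ 2) x := by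
  have hnum : HasDerivAt (fun x => a * x + b) a x := by
    simpa using ((hasDerivAt_id x).const_mul a).add_const b
  have hden : HasDerivAt (fun x => p * x ^ 2 + c * x + d) (2 * p * x + c) x := by
    have := (((hasDerivAt_pow 2 x).const_mul p).add ((hasDerivAt_id x).const_mul c)).add_const d
    exact this.congr_deriv (by push_cast; ring)
  exact (hnum.div hden hD).congr_deriv (by ring)

theorem deriv_linear_div_quadratic_zero (hd : d ≠ 0) :
    deriv (fun x => (a * x + b) / (p * x ^ 2 + c * x + d)) 0 = (a * d - b * c) / d ^ 2 := by
  rw [(hasDerivAt_linear_div_quadratic a b p c d (by simpa using hd)).deriv]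
  simp

theorem eventually_deriv_linear_div_quadratic_neg {a p : ℝ} (ha : 0 < a) (hp : 0 < p) :
    ∀ᶠ x in atTop, deriv (fun x => (a * x + b) / (p * x ^ 2 + c * x + d)) x < 0 := by
  -- `p x² + c x + d` is eventually positive: its negative is a quadratic with leading term `-p x²`.
  filter_upwards [eventually_neg_mul_sq_add_mul_add_neg (mul_pos ha hp) (-2 * b * p) (a * d - b * c),
    eventually_neg_mul_sq_add_mul_add_neg hp (-c) (-d)] with x hnum hden
  rw [(hasDerivAt_linear_div_quadratic a b p c d (by linarith)).deriv]
  exact div_neg_of_neg_of_pos (by linarith) (by nlinarith)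

end LinearDivQuadratic

/-- If (κ−α)² + α(λ−α) < 0 then the staleness Δ̃ has strictly positive
derivative at μ = 0, and its derivative is eventually negative (for all μ > M for some
M > 0). -/
theorem staleness_not_monotone
    (α β lam : ℝ) (hα : 0 < α) (hβ : 0 < β) (hlam : 0 < lam)
    (κ : ℝ) (hκ : κ = lam + α + β)
    (hcond : (κ - α) ^ 2 + α * (lam - α) < 0) :
    0 < deriv (fun x : ℝ =>
        (β * (lam + 2 * α) * x + lam * β * κ) /
        (κ * x ^ 2 + (κ ^ 2 + β * lam) * x + lam * (α + β) * κ)) 0 ∧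
    ∃ M : ℝ, 0 < M ∧ ∀ μ : ℝ, M < μ →
      deriv (fun x : ℝ =>
        (β * (lam + 2 * α) * x + lam * β * κ) /
        (κ * x ^ 2 + (κ ^ 2 + β * lam) * x + lam * (α + β) * κ)) μ < 0 := by
  have hκpos : 0 < κ := by rw [hκ]; positivity
  have hcross : 0 < β * (lam + 2 * α) * (lam * (α + β) * κ) - lam * β * κ * (κ ^ 2 + β * lam) := by
    have hfactor : β * (lam + 2 * α) * (lam * (α + β) * κ) - lam * β * κ * (κ ^ 2 + β * lam) =
        -(lam * β * κ) * ((κ - α) ^ 2 + α * (lam - α)) := by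
      subst hκ; ring
    rw [hfactor]
    exact mul_pos_of_neg_of_neg (neg_neg_of_pos (by positivity)) hcond
  refine ⟨?_, ?_⟩
  · rw [deriv_linear_div_quadratic_zero _ _ _ _ _ (by positivity)]
    positivity
  · obtain ⟨M, hM⟩ := eventually_atTop.1
      (eventually_deriv_linear_div_quadratic_neg (lam * β * κ) (κ ^ 2 + β * lam)
        (lam * (α + β) * κ) (by positivity : 0 < β * (lam + 2 * α)) hκpos)
    exact ⟨max M 1, by positivity, fun μ hμ => hM μ (le_of_max_le_left hμ.le)⟩
end

section
/- Fix reals α, β, λ > 0 with λ > α, and set κ = λ+α+β. Define the freshness function E[Δ](μ) = (κμ² + (κ²−2αβ)μ + λακ)/(κμ² + (κ²+βλ)μ + λ(α+β)κ) for μ ≥ 0. Then E[Δ] is strictly monotone increasing on [0,∞). -/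
/-! With a common leading coefficient, the cross difference of two quadratics factors as
`N(y) D(x) - N(x) D(y) = (y - x) · Q(x, y)` with `Q` of degree one in each variable; when all
coefficients of `Q` are nonnegative and its constant term is positive, `N / D` increases on
`[0, ∞)`. For the freshness function the constant term of `Q` is `λκβ (λ² - α² + λα + β² + 2βλ)`,
which is where `λ > α` enters. -/

open Set

lemma quadratic_cross_sub (a b c d e x y : ℝ) :
    (a * y ^ 2 + b * y + c) * (a * x ^ 2 + d * x + e) -
        (a * x ^ 2 + b * x + c) * (a * y ^ 2 + d * y + e) =
      (y - x) * (a * (d - b) * (x * y) + a * (e - c) * (x + y) + (b * e - c * d)) := by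
  ring

lemma strictMonoOn_div_of_mul_lt_mul {N D : ℝ → ℝ} {s : Set ℝ} (hD : ∀ x ∈ s, 0 < D x)
    (h : ∀ x ∈ s, ∀ y ∈ s, x < y → N x * D y < N y * D x) :
    StrictMonoOn (fun x => N x / D x) s := fun x hx y hy hxy =>
  (div_lt_div_iff₀ (hD x hx) (hD y hy)).2 (h x hx y hy hxy)

theorem strictMonoOn_quadratic_div_quadratic {a b c d e : ℝ} (ha : 0 ≤ a) (hbd : b ≤ d)
    (hce : c ≤ e) (hd : 0 ≤ d) (he : 0 < e) (hdet : c * d < b * e) :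
    StrictMonoOn (fun x => (a * x ^ 2 + b * x + c) / (a * x ^ 2 + d * x + e)) (Ici 0) := by
  refine strictMonoOn_div_of_mul_lt_mul (fun x (hx : 0 ≤ x) => by positivity) ?_
  intro x (hx : 0 ≤ x) y (hy : 0 ≤ y) hxy
  have hQ : 0 < a * (d - b) * (x * y) + a * (e - c) * (x + y) + (b * e - c * d) := by
    have : 0 ≤ a * (d - b) * (x * y) := by have := sub_nonneg.2 hbd; positivity
    have : 0 ≤ a * (e - c) * (x + y) := by have := sub_nonneg.2 hce; positivity
    linarith
  linarith [quadratic_cross_sub a b c d e x y, mul_pos (sub_pos.2 hxy) hQ]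

/-- If λ > α then the freshness E[Δ](μ) is strictly monotone increasing on
[0,∞). -/
theorem freshness_strictMono
    (α β lam : ℝ) (hα : 0 < α) (hβ : 0 < β) (hlam : 0 < lam) (hlamα : α < lam)
    (κ : ℝ) (hκ : κ = lam + α + β) :
    StrictMonoOn (fun μ : ℝ =>
        (κ * μ ^ 2 + (κ ^ 2 - 2 * α * β) * μ + lam * α * κ) /
        (κ * μ ^ 2 + (κ ^ 2 + β * lam) * μ + lam * (α + β) * κ))
      (Set.Ici 0) := by
  have hκ0 : 0 < κ := by rw [hκ]; positivity
  have hconst : (κ ^ 2 - 2 * α * β) * (lam * (α + β) * κ) - lam * α * κ * (κ ^ 2 + β * lam) =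
      lam * κ * β * ((lam - α) * (lam + α) + β ^ 2 + lam * α + 2 * β * lam) := by
    subst hκ; ring
  have hgap : 0 < (lam - α) * (lam + α) + β ^ 2 + lam * α + 2 * β * lam := by
    have := sub_pos.2 hlamα; positivity
  refine strictMonoOn_quadratic_div_quadratic hκ0.le
    (by linarith [mul_pos hα hβ, mul_pos hβ hlam]) (by gcongr; linarith) (by positivity)
    (by positivity) ?_
  linarith [mul_pos (mul_pos (mul_pos hlam hκ0) hβ) hgap]
end

section
/- Let N ≥ 1, Ω > 0, and for 1 ≤ i ≤ N let α_i, β_i, λ_i > 0, κ_i = λ_i+α_i+β_i, and w_i > 0 with Σ_i w_i = 1. Define the staleness functions Δ̃_i(x) = (β_i(λ_i+2α_i)x + λ_iβ_iκ_i)/(κ_ix² + (κ_i²+β_iλ_i)x + λ_i(α_i+β_i)κ_i) and h(μ) = Σ_{i=1}^N w_i Δ̃_i(μ_i). Suppose that either (κ_i−α_i)² + α_i(λ_i−α_i) > 0 for some i, or λ_i > α_i for some i. Then any μ* minimizing h over K = {μ ∈ ℝ^N : μ_i ≥ 0 for all i, Σ_i μ_i ≤ Ω} satisfies Σ_{i=1}^N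 μ*_i = Ω. -/
lemma strict_dec (a b l k x y : ℝ) (ha : 0 < a) (hb : 0 < b) (hl : 0 < l)
    (hk : k = l + a + b) (hP : 0 < (k - a) ^ 2 + a * (l - a))
    (hx : 0 ≤ x) (hxy : x < y) :
    (b * (l + 2 * a) * y + l * b * k) /
      (k * y ^ 2 + (k ^ 2 + b * l) * y + l * (a + b) * k) <
    (b * (l + 2 * a) * x + l * b * k) /
      (k * x ^ 2 + (k ^ 2 + b * l) * x + l * (a + b) * k) := by
  have hy : 0 ≤ y := le_of_lt (lt_of_le_of_lt hx hxy)
  have hk0 : 0 < k := by rw [hk]; linarith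
  have hQx : 0 < k * x ^ 2 + (k ^ 2 + b * l) * x + l * (a + b) * k := by
    have h1 : 0 ≤ k * x ^ 2 := by positivity
    have h2 : 0 ≤ (k ^ 2 + b * l) * x := by positivity
    have h3 : 0 < l * (a + b) * k := by positivity
    linarith
  have hQy : 0 < k * y ^ 2 + (k ^ 2 + b * l) * y + l * (a + b) * k := by
    have h1 : 0 ≤ k * y ^ 2 := by positivity
    have h2 : 0 ≤ (k ^ 2 + b * l) * y := by positivity
    have h3 : 0 < l * (a + b) * k := by positivity
    linarith
  rw [div_lt_div_iff₀ hQy hQx]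
  have key : l * b * k * ((k - a) ^ 2 + a * (l - a)) =
      l * b * k * (k ^ 2 + b * l) - b * (l + 2 * a) * (l * (a + b) * k) := by
    rw [hk]; ring
  nlinarith [mul_pos (sub_pos.2 hxy) (mul_pos (mul_pos (mul_pos hl hb) hk0) hP),
    mul_nonneg (mul_nonneg (sub_pos.2 hxy).le (mul_nonneg hx hy))
      (mul_pos (mul_pos hb (by linarith : (0:ℝ) < l + 2*a)) hk0).le,
    mul_nonneg (mul_nonneg (sub_pos.2 hxy).le (by linarith : 0 ≤ x + y))
      (mul_pos (mul_pos (mul_pos hl hb) hk0) hk0).le]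

/-- If for some machine (κ_i−α_i)² + α_i(λ_i−α_i) > 0 or λ_i > α_i, then any
minimizer of the weighted average staleness over the sampling budget constraint set uses
the full budget: Σ_i μ*_i = Ω. -/
theorem waf_optimal_budget_active
    (N : ℕ) (hN : 1 ≤ N) (Ω : ℝ) (hΩ : 0 < Ω)
    (α β lam : Fin N → ℝ)
    (hα : ∀ i, 0 < α i) (hβ : ∀ i, 0 < β i) (hlam : ∀ i, 0 < lam i)
    (κ : Fin N → ℝ) (hκ : ∀ i, κ i = lam i + α i + β i)
    (w : Fin N → ℝ) (hw : ∀ i, 0 < w i) (hwsum : ∑ i, w i = 1)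
    (Δt : Fin N → ℝ → ℝ)
    (hΔt : ∀ i x, Δt i x =
      (β i * (lam i + 2 * α i) * x + lam i * β i * κ i) /
      (κ i * x ^ 2 + ((κ i) ^ 2 + β i * lam i) * x + lam i * (α i + β i) * κ i))
    (h : (Fin N → ℝ) → ℝ)
    (hh : ∀ μ, h μ = ∑ i, w i * Δt i (μ i))
    (hcond : (∃ i, 0 < (κ i - α i) ^ 2 + α i * (lam i - α i)) ∨ (∃ i, α i < lam i))
    (μstar : Fin N → ℝ)
    (hmem : (∀ i, 0 ≤ μstar i) ∧ ∑ i, μstar i ≤ Ω)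
    (hopt : ∀ μ : Fin N → ℝ, (∀ i, 0 ≤ μ i) → ∑ i, μ i ≤ Ω → h μstar ≤ h μ) :
    ∑ i, μstar i = Ω := by
  by_contra hne
  have hlt : ∑ i, μstar i < Ω := lt_of_le_of_ne hmem.2 hne
  -- get an index with P_i > 0
  obtain ⟨i, hP⟩ : ∃ i, 0 < (κ i - α i) ^ 2 + α i * (lam i - α i) := by
    rcases hcond with ⟨i, hP⟩ | ⟨i, hla⟩
    · exact ⟨i, hP⟩
    · refine ⟨i, ?_⟩
      have h1 : 0 < (κ i - α i) ^ 2 := by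
        have : κ i - α i = lam i + β i := by rw [hκ i]; ring
        rw [this]; exact pow_pos (by have := hlam i; have := hβ i; linarith) 2
      have h2 : 0 < α i * (lam i - α i) := mul_pos (hα i) (by linarith)
      linarith
  set ε : ℝ := Ω - ∑ i, μstar i with hε
  have hε0 : 0 < ε := by linarith
  set μ : Fin N → ℝ := Function.update μstar i (μstar i + ε) with hμ
  have hμnn : ∀ j, 0 ≤ μ j := by
    intro j
    by_cases hj : j = i
    · subst hj; rw [hμ, Function.update_self]; have := hmem.1 j; linarith
    · rw [hμ, Function.update_of_ne hj]; exact hmem.1 j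
  have hs2 : ∑ j, μstar j = μstar i + ∑ j ∈ Finset.univ \ {i}, μstar j := by
    rw [← Finset.erase_eq, Finset.add_sum_erase _ _ (Finset.mem_univ i)]
  have hμsum : ∑ j, μ j = Ω := by
    rw [hμ, Finset.sum_update_of_mem (Finset.mem_univ i)]
    rw [hs2] at hε
    linarith
  have hdec : Δt i (μstar i + ε) < Δt i (μstar i) := by
    rw [hΔt i (μstar i + ε), hΔt i (μstar i)]
    exact strict_dec (α i) (β i) (lam i) (κ i) (μstar i) (μstar i + ε)
      (hα i) (hβ i) (hlam i) (hκ i) hP (hmem.1 i) (by linarith)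
  have hsum_lt : h μ < h μstar := by
    rw [hh, hh]
    refine Finset.sum_lt_sum (fun j _ => ?_) ⟨i, Finset.mem_univ i, ?_⟩
    · by_cases hj : j = i
      · subst hj
        rw [hμ, Function.update_self]
        exact le_of_lt (mul_lt_mul_of_pos_left hdec (hw j))
      · rw [hμ, Function.update_of_ne hj]
    · rw [hμ, Function.update_self]
      exact mul_lt_mul_of_pos_left hdec (hw i)
  exact absurd (hopt μ hμnn (le_of_eq hμsum)) (not_le.2 hsum_lt)
end
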